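/- arXiv:2507.17544 — 3 statements merged into one kernel-verified Lean document; each statement's English description precedes it below -/
import Mathlib

section
/- Let L be a positive self-adjoint trace-class operator on a separable Hilbert space with eigenvalues (μ_l) listed in decreasing order, and define the effective dimension N(λ) = tr((L+λI)^{-1} L) for λ > 0. If there exist Q > 0 and γ ∈ (0,1] such that N(λ) ≤ Q λ^{-γ} for all λ > 0, then μ_l ≤ (2Q)^{1/γ} l^{-1/γ} for all positive integers l. -/
/-- If the eigenvalues `μ` (in decreasing order, nonnegative, summable)
of a positive self-adjoint trace-class operator satisfy the effective-dimension bound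
`N(λ) = ∑' l, μ l / (μ l + λ) ≤ Q λ^{-γ}` for all `λ > 0`, then
`μ l ≤ (2Q)^{1/γ} l^{-1/γ}` for all positive integers `l` (here `μ l` is the `(l+1)`-th
eigenvalue, i.e. 1-based indexing is written as `l+1`). -/
theorem stmt0 (μ : ℕ → ℝ) (hnonneg : ∀ l, 0 ≤ μ l) (hmono : Antitone μ)
    (hsum : Summable μ) (Q γ : ℝ) (hQ : 0 < Q) (hγ : γ ∈ Set.Ioc (0 : ℝ) 1)
    (hN : ∀ lam : ℝ, 0 < lam → ∑' l, μ l / (μ l + lam) ≤ Q * lam ^ (-γ)) :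
    ∀ l : ℕ, μ l ≤ (2 * Q) ^ (1 / γ) * ((l : ℝ) + 1) ^ (-(1 / γ)) := by
  obtain ⟨hγ0, hγ1⟩ := hγ
  intro l
  have hlpos : (0:ℝ) < (l:ℝ) + 1 := by positivity
  have hrhs : 0 ≤ (2 * Q) ^ (1 / γ) * ((l : ℝ) + 1) ^ (-(1 / γ)) := by positivity
  rcases eq_or_lt_of_le (hnonneg l) with h0 | hμpos
  · linarith [hrhs]
  -- summability of the terms
  have hterm : ∀ k, 0 ≤ μ k / (μ k + μ l) := fun k => by
    have := hnonneg k; positivity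
  have hsum' : Summable (fun k => μ k / (μ k + μ l)) := by
    apply Summable.of_nonneg_of_le hterm (fun k => ?_) (hsum.mul_right (μ l)⁻¹)
    rw [div_eq_mul_inv]
    apply mul_le_mul_of_nonneg_left _ (hnonneg k)
    apply inv_anti₀ hμpos
    linarith [hnonneg k]
  -- finite sum lower bound
  have hfin : ((l:ℝ) + 1) / 2 ≤ ∑ k ∈ Finset.range (l+1), μ k / (μ k + μ l) := by
    have : ∀ k ∈ Finset.range (l+1), (1:ℝ)/2 ≤ μ k / (μ k + μ l) := by
      intro k hk
      have hkl : μ l ≤ μ k := hmono (Nat.lt_succ_iff.mp (Finset.mem_range.mp hk))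
      rw [div_le_div_iff₀ (by norm_num) (by linarith)]
      linarith
    calc ((l:ℝ) + 1) / 2 = ∑ k ∈ Finset.range (l+1), (1:ℝ)/2 := by
          simp [Finset.sum_const]; ring
      _ ≤ _ := Finset.sum_le_sum this
  have hle : ((l:ℝ) + 1) / 2 ≤ Q * (μ l) ^ (-γ) := by
    refine hfin.trans (le_trans (Summable.sum_le_tsum _ (fun k _ => hterm k) hsum') (hN _ hμpos))
  -- rearrange: μ l ^ γ ≤ 2Q/(l+1)
  have hpow : (μ l) ^ γ ≤ 2 * Q / ((l:ℝ) + 1) := by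
    have hμγ : (0:ℝ) < (μ l) ^ γ := Real.rpow_pos_of_pos hμpos γ
    have hneg : (μ l) ^ (-γ) = ((μ l) ^ γ)⁻¹ := by
      rw [Real.rpow_neg (hnonneg l)]
    rw [hneg] at hle
    have h2 := mul_le_mul_of_nonneg_right hle hμγ.le
    rw [mul_assoc, inv_mul_cancel₀ (ne_of_gt hμγ), mul_one] at h2
    rw [le_div_iff₀ hlpos]
    nlinarith
  -- take 1/γ powers
  have hγne : γ ≠ 0 := ne_of_gt hγ0
  have := Real.rpow_le_rpow (Real.rpow_nonneg (hnonneg l) γ) hpow (by positivity : (0:ℝ) ≤ 1/γ)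
  rwa [one_div, Real.rpow_rpow_inv (hnonneg l) hγne, ← one_div,
    Real.div_rpow (by positivity) (le_of_lt hlpos),
    div_eq_mul_inv, ← Real.rpow_neg (le_of_lt hlpos)] at this
end

section
/- Let L be a positive self-adjoint trace-class operator on a separable Hilbert space with eigenvalues (μ_l) in decreasing order, and let N(λ) = Σ_l μ_l/(μ_l+λ). Suppose μ_l ≤ q l^{-1/γ} for all l ≥ 1, where q > 0 and γ ∈ (0,1). Then for all λ > 0, N(λ) ≤ max{(1+q^γ)/(1-γ), q/(1-γ)} · λ^{-γ}. -/
/-!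
Split the effective dimension at `K ≈ (q/λ)^γ`: each of the first `K` terms is at most `1`, and
every later term is at most `μ_l/λ`, whose sum is controlled by the integral test for
`x ↦ q x^{-1/γ}` on `(K, ∞)`. The choice of `K` balances both parts at `(q/λ)^γ`. For `λ ≥ 1`
no split is needed: `N(λ) ≤ λ⁻¹ ∑ μ_l ≤ λ^{-γ} q/(1-γ)`.
-/

open Real Set MeasureTheory

section RpowDecay

variable {p : ℝ}

lemma summable_nat_add_one_rpow_neg (hp : 1 < p) :
    Summable fun l : ℕ => ((l : ℝ) + 1) ^ (-p) := by
  have h := (summable_nat_add_iff 1).2 (Real.summable_nat_rpow.2 (neg_lt_neg hp))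
  exact_mod_cast h

lemma tsum_nat_add_add_one_rpow_neg_le (hp : 1 < p) {K : ℕ} (hK : 1 ≤ K) :
    ∑' l : ℕ, ((l + K + 1 : ℕ) : ℝ) ^ (-p) ≤ (K : ℝ) ^ (1 - p) / (p - 1) := by
  have hK0 : (0 : ℝ) < K := by exact_mod_cast hK
  have hanti : AntitoneOn (fun x : ℝ => x ^ (-p)) (Ici (K : ℝ)) := fun x hx y _ hxy =>
    rpow_le_rpow_of_nonpos (hK0.trans_le hx) hxy (by linarith)
  calc ∑' l : ℕ, ((l + K + 1 : ℕ) : ℝ) ^ (-p)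
      ≤ ∫ x in Ioi (K : ℝ), x ^ (-p) :=
        hanti.tsum_comp_add_le_integral K (integrableOn_Ioi_rpow_of_lt (by linarith) hK0)
          fun x hx => rpow_nonneg (hK0.trans hx).le _
    _ = (K : ℝ) ^ (1 - p) / (p - 1) := by
        rw [integral_Ioi_rpow_of_lt (by linarith) hK0, neg_div, ← div_neg]
        ring_nf

variable {μ : ℕ → ℝ} {q : ℝ}

lemma summable_of_le_rpow_neg (hμ : ∀ l, 0 ≤ μ l) (hp : 1 < p)
    (hdecay : ∀ l : ℕ, μ l ≤ q * ((l : ℝ) + 1) ^ (-p)) : Summable μ :=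
  .of_nonneg_of_le hμ hdecay ((summable_nat_add_one_rpow_neg hp).mul_left q)

lemma tsum_nat_add_le_of_le_rpow_neg (hμ : ∀ l, 0 ≤ μ l) (hp : 1 < p)
    (hdecay : ∀ l : ℕ, μ l ≤ q * ((l : ℝ) + 1) ^ (-p)) {K : ℕ} (hK : 1 ≤ K) :
    ∑' l, μ (l + K) ≤ q * (K : ℝ) ^ (1 - p) / (p - 1) := by
  have hdecay' : ∀ l : ℕ, μ (l + K) ≤ q * ((l + K + 1 : ℕ) : ℝ) ^ (-p) := fun l => by
    simpa using hdecay (l + K)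
  have hsum : Summable fun l : ℕ => ((l + K + 1 : ℕ) : ℝ) ^ (-p) := by
    have h := (summable_nat_add_iff K).2 (summable_nat_add_one_rpow_neg hp)
    exact_mod_cast h
  have hq : 0 ≤ q := nonneg_of_mul_nonneg_left ((hμ 0).trans (hdecay 0)) (by positivity)
  calc ∑' l, μ (l + K) ≤ ∑' l : ℕ, q * ((l + K + 1 : ℕ) : ℝ) ^ (-p) :=
        Summable.tsum_le_tsum hdecay'
          ((summable_nat_add_iff K).2 (summable_of_le_rpow_neg hμ hp hdecay)) (hsum.mul_left q)
    _ ≤ q * ((K : ℝ) ^ (1 - p) / (p - 1)) := by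
        rw [tsum_mul_left]
        exact mul_le_mul_of_nonneg_left (tsum_nat_add_add_one_rpow_neg_le hp hK) hq
    _ = q * (K : ℝ) ^ (1 - p) / (p - 1) := by ring

lemma tsum_le_of_le_rpow_neg (hμ : ∀ l, 0 ≤ μ l) (hp : 1 < p)
    (hdecay : ∀ l : ℕ, μ l ≤ q * ((l : ℝ) + 1) ^ (-p)) :
    ∑' l, μ l ≤ q * p / (p - 1) := by
  have hhead : μ 0 ≤ q := by simpa using hdecay 0
  have htail := tsum_nat_add_le_of_le_rpow_neg hμ hp hdecay le_rfl
  rw [(summable_of_le_rpow_neg hμ hp hdecay).tsum_eq_zero_add]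
  have hp1 : 0 < p - 1 := by linarith
  calc μ 0 + ∑' l, μ (l + 1) ≤ q + q / (p - 1) := by simpa using add_le_add hhead htail
    _ = q * p / (p - 1) := by field_simp; ring

end RpowDecay

section EffectiveDimension

variable {μ : ℕ → ℝ} {lam : ℝ}

lemma div_add_le_div (hμ : ∀ l, 0 ≤ μ l) (hlam : 0 < lam) (l : ℕ) :
    μ l / (μ l + lam) ≤ μ l / lam :=
  div_le_div_of_nonneg_left (hμ l) hlam (le_add_of_nonneg_left (hμ l))

lemma summable_div_add (hμ : ∀ l, 0 ≤ μ l) (hsum : Summable μ) (hlam : 0 < lam) :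
    Summable fun l => μ l / (μ l + lam) :=
  .of_nonneg_of_le (fun l => div_nonneg (hμ l) (by linarith [hμ l])) (div_add_le_div hμ hlam)
    (hsum.div_const lam)

lemma tsum_div_add_le_tsum_div (hμ : ∀ l, 0 ≤ μ l) (hsum : Summable μ) (hlam : 0 < lam) :
    ∑' l, μ l / (μ l + lam) ≤ (∑' l, μ l) / lam := by
  rw [← tsum_div_const]
  exact Summable.tsum_le_tsum (div_add_le_div hμ hlam) (summable_div_add hμ hsum hlam)
    (hsum.div_const lam)

lemma tsum_div_add_le_nat_add (hμ : ∀ l, 0 ≤ μ l) (hsum : Summable μ) (hlam : 0 < lam) (K : ℕ) :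
    ∑' l, μ l / (μ l + lam) ≤ K + (∑' l, μ (l + K)) / lam := by
  have hhead : ∑ l ∈ Finset.range K, μ l / (μ l + lam) ≤ K := by
    calc ∑ l ∈ Finset.range K, μ l / (μ l + lam) ≤ ∑ _l ∈ Finset.range K, (1 : ℝ) :=
          Finset.sum_le_sum fun l _ =>
            div_le_one_of_le₀ (le_add_of_nonneg_right hlam.le) (by linarith [hμ l])
      _ = K := by simp
  rw [← (summable_div_add hμ hsum hlam).sum_add_tsum_nat_add K]
  exact add_le_add hhead
    (tsum_div_add_le_tsum_div (fun l => hμ (l + K)) ((summable_nat_add_iff K).2 hsum) hlam)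

variable {q γ : ℝ}

lemma tsum_div_add_le_of_one_le (hμ : ∀ l, 0 ≤ μ l) (hγ0 : 0 < γ) (hγ1 : γ < 1)
    (hdecay : ∀ l : ℕ, μ l ≤ q * ((l : ℝ) + 1) ^ (-(1 / γ))) (hlam : 1 ≤ lam) :
    ∑' l, μ l / (μ l + lam) ≤ q / (1 - γ) * lam ^ (-γ) := by
  have hp : 1 < 1 / γ := by rw [lt_div_iff₀ hγ0]; linarith
  have hsum : ∑' l, μ l ≤ q / (1 - γ) := by
    have h := tsum_le_of_le_rpow_neg hμ hp hdecay
    have h1γ : 1 - γ ≠ 0 := by linarith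
    rwa [show q * (1 / γ) / (1 / γ - 1) = q / (1 - γ) by field_simp] at h
  have hlam_inv : lam⁻¹ ≤ lam ^ (-γ) := by
    rw [← rpow_neg_one]
    exact rpow_le_rpow_of_exponent_le hlam (by linarith)
  calc ∑' l, μ l / (μ l + lam)
      ≤ (∑' l, μ l) / lam :=
        tsum_div_add_le_tsum_div hμ (summable_of_le_rpow_neg hμ hp hdecay) (by linarith)
    _ ≤ q / (1 - γ) * lam⁻¹ := by rw [div_eq_mul_inv]; gcongr
    _ ≤ q / (1 - γ) * lam ^ (-γ) := by
        gcongr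
        exact (tsum_nonneg hμ).trans hsum

lemma tsum_div_add_le_of_lt_one (hμ : ∀ l, 0 ≤ μ l) (hq : 0 < q) (hγ0 : 0 < γ) (hγ1 : γ < 1)
    (hdecay : ∀ l : ℕ, μ l ≤ q * ((l : ℝ) + 1) ^ (-(1 / γ))) (hlam : 0 < lam) (hlam1 : lam < 1) :
    ∑' l, μ l / (μ l + lam) ≤ (1 + q ^ γ) / (1 - γ) * lam ^ (-γ) := by
  have hp : 1 < 1 / γ := by rw [lt_div_iff₀ hγ0]; linarith
  have h1γ : 0 < 1 - γ := by linarith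
  set A := (q / lam) ^ γ with hA_def
  have hqlam : 0 < q / lam := div_pos hq hlam
  have hA : 0 < A := rpow_pos_of_pos hqlam γ
  set K := ⌈A⌉₊
  have hK : 1 ≤ K := Nat.ceil_pos.2 hA
  -- `(q/λ) A^{1-1/γ} = A`, which is what makes `K ≈ A` the balancing cut.
  have htail : (∑' l, μ (l + K)) / lam ≤ A * (γ / (1 - γ)) := by
    have hKA : (K : ℝ) ^ (1 - 1 / γ) ≤ A ^ (1 - 1 / γ) :=
      rpow_le_rpow_of_nonpos hA (Nat.le_ceil A) (by linarith)
    have hbalance : q / lam * A ^ (1 - 1 / γ) = A := by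
      rw [hA_def, ← rpow_mul hqlam.le, show γ * (1 - 1 / γ) = γ - 1 by field_simp,
        rpow_sub_one hqlam.ne']
      field_simp
    calc (∑' l, μ (l + K)) / lam ≤ q * (K : ℝ) ^ (1 - 1 / γ) / (1 / γ - 1) / lam := by
          gcongr
          exact tsum_nat_add_le_of_le_rpow_neg hμ hp hdecay hK
      _ ≤ q * A ^ (1 - 1 / γ) / (1 / γ - 1) / lam := by gcongr
      _ = q / lam * A ^ (1 - 1 / γ) * (γ / (1 - γ)) := by field_simp
      _ = A * (γ / (1 - γ)) := by rw [hbalance]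
  have hA_eq : A = q ^ γ * lam ^ (-γ) := by
    rw [hA_def, div_rpow hq.le hlam.le, rpow_neg hlam.le, div_eq_mul_inv]
  have hlamγ : 1 ≤ lam ^ (-γ) := one_le_rpow_of_pos_of_le_one_of_nonpos hlam hlam1.le (by linarith)
  calc ∑' l, μ l / (μ l + lam)
      ≤ K + (∑' l, μ (l + K)) / lam :=
        tsum_div_add_le_nat_add hμ (summable_of_le_rpow_neg hμ hp hdecay) hlam K
    _ ≤ (A + 1) + A * (γ / (1 - γ)) := add_le_add (Nat.ceil_lt_add_one hA.le).le htail
    _ = (A + (1 - γ)) / (1 - γ) := by field_simp; ring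
    _ ≤ (q ^ γ * lam ^ (-γ) + lam ^ (-γ)) / (1 - γ) := by
        rw [hA_eq]
        gcongr
        linarith
    _ = (1 + q ^ γ) / (1 - γ) * lam ^ (-γ) := by ring

end EffectiveDimension

theorem stmt1_general (μ : ℕ → ℝ) (hnonneg : ∀ l, 0 ≤ μ l)
    (q γ : ℝ) (hq : 0 < q) (hγ : γ ∈ Set.Ioo (0 : ℝ) 1)
    (hdecay : ∀ l : ℕ, μ l ≤ q * ((l : ℝ) + 1) ^ (-(1 / γ))) :
    ∀ lam : ℝ, 0 < lam →
      ∑' l, μ l / (μ l + lam) ≤ max ((1 + q ^ γ) / (1 - γ)) (q / (1 - γ)) * lam ^ (-γ) := by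
  obtain ⟨hγ0, hγ1⟩ := hγ
  intro lam hlam
  rcases le_or_gt 1 lam with hlam1 | hlam1
  · refine (tsum_div_add_le_of_one_le hnonneg hγ0 hγ1 hdecay hlam1).trans ?_
    gcongr
    exact le_max_right _ _
  · refine (tsum_div_add_le_of_lt_one hnonneg hq hγ0 hγ1 hdecay hlam hlam1).trans ?_
    gcongr
    exact le_max_left _ _

/-- If the nonnegative decreasing eigenvalue sequence `μ` of a positive
self-adjoint trace-class operator satisfies the polynomial decay `μ l ≤ q l^{-1/γ}`
(1-based indexing written as `l+1`), with `q > 0` and `γ ∈ (0,1)`, then for every `λ > 0`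
the effective dimension `N(λ) = ∑' l, μ l / (μ l + λ)` satisfies
`N(λ) ≤ max ((1+q^γ)/(1-γ)) (q/(1-γ)) · λ^{-γ}`. -/
theorem stmt1 (μ : ℕ → ℝ) (hnonneg : ∀ l, 0 ≤ μ l) (hmono : Antitone μ)
    (q γ : ℝ) (hq : 0 < q) (hγ : γ ∈ Set.Ioo (0 : ℝ) 1)
    (hdecay : ∀ l : ℕ, μ l ≤ q * ((l : ℝ) + 1) ^ (-(1 / γ))) :
    ∀ lam : ℝ, 0 < lam →
      ∑' l, μ l / (μ l + lam) ≤ max ((1 + q ^ γ) / (1 - γ)) (q / (1 - γ)) * lam ^ (-γ) :=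
  stmt1_general μ hnonneg q γ hq hγ hdecay
end

section
/- Let H and K be separable Hilbert spaces, X : H → K a bounded linear operator, and A : H → H a positive semidefinite bounded self-adjoint operator. Then for every σ ∈ [0,1], ‖X A^σ‖ ≤ ‖X‖^{1−σ} ‖X A‖^σ, where A^σ denotes the operator power. -/
/-!
Concavity of `x ↦ x ^ σ` puts it below its tangent line at any `l > 0`; applied to `x²` through the
functional calculus this gives `‖A^σ w‖² ≤ (1 - σ) l^σ ‖w‖² + σ l^(σ-1) ‖A w‖²` for every `l > 0`,
and optimising in `l` yields the Hölder–McCarthy bound `‖A^σ w‖ ≤ ‖w‖^(1-σ) ‖A w‖^σ`.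
With `w = X* u` and `‖X A^σ‖ = ‖A^σ X*‖`, `‖A X*‖ = ‖X A‖` this is the claim.
-/

open Set

namespace Real

lemma rpow_le_tangent_line {σ l x : ℝ} (hσ : σ ∈ Icc (0 : ℝ) 1) (hl : 0 < l) (hx : 0 ≤ x) :
    x ^ σ ≤ (1 - σ) * l ^ σ + σ * l ^ (σ - 1) * x := by
  have amgm : l ^ (1 - σ) * x ^ σ ≤ (1 - σ) * l + σ * x :=
    geom_mean_le_arith_mean2_weighted (sub_nonneg.2 hσ.2) hσ.1 hl.le hx (by ring)
  have hinv : l ^ (σ - 1) * l ^ (1 - σ) = 1 := by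
    rw [← rpow_add hl, show σ - 1 + (1 - σ) = 0 by ring, rpow_zero]
  calc x ^ σ = l ^ (σ - 1) * (l ^ (1 - σ) * x ^ σ) := by rw [← mul_assoc, hinv, one_mul]
    _ ≤ l ^ (σ - 1) * ((1 - σ) * l + σ * x) := by gcongr
    _ = (1 - σ) * l ^ σ + σ * l ^ (σ - 1) * x := by
      rw [show l ^ σ = l ^ (σ - 1) * l by rw [← rpow_add_one hl.ne', sub_add_cancel]]
      ring

lemma tangent_bound_at_div_eq {σ p q : ℝ} (hp : 0 < p) (hq : 0 < q) :
    (1 - σ) * (q / p) ^ σ * p + σ * (q / p) ^ (σ - 1) * q = p ^ (1 - σ) * q ^ σ := by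
  have h₁ : (q / p) ^ σ * p = p ^ (1 - σ) * q ^ σ := by
    rw [div_rpow hq.le hp.le, rpow_sub hp, rpow_one]
    field_simp
  have h₂ : (q / p) ^ (σ - 1) * q = p ^ (1 - σ) * q ^ σ := by
    rw [div_rpow hq.le hp.le, rpow_sub hp, rpow_sub hq, rpow_sub hp, rpow_one, rpow_one]
    field_simp
  linear_combination (1 - σ) * h₁ + σ * h₂

/-- The optimal `l = q / p` only exists for `p, q > 0`; the degenerate cases follow by shifting
`p, q` to `p + ε, q + ε` and letting `ε → 0`. -/
lemma le_rpow_mul_rpow_of_forall_le_tangent_bound {σ a p q : ℝ} (hσ : σ ∈ Icc (0 : ℝ) 1)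
    (hp : 0 ≤ p) (hq : 0 ≤ q)
    (h : ∀ l > 0, a ≤ (1 - σ) * l ^ σ * p + σ * l ^ (σ - 1) * q) :
    a ≤ p ^ (1 - σ) * q ^ σ := by
  have hσ₀ : 0 ≤ σ := hσ.1
  have hσ₁ : 0 ≤ 1 - σ := sub_nonneg.2 hσ.2
  have shifted : ∀ ε > 0, a ≤ (p + ε) ^ (1 - σ) * (q + ε) ^ σ := by
    intro ε hε
    have hpε : 0 < p + ε := by linarith
    have hqε : 0 < q + ε := by linarith
    calc a ≤ (1 - σ) * ((q + ε) / (p + ε)) ^ σ * p + σ * ((q + ε) / (p + ε)) ^ (σ - 1) * q :=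
          h _ (div_pos hqε hpε)
      _ ≤ (1 - σ) * ((q + ε) / (p + ε)) ^ σ * (p + ε)
          + σ * ((q + ε) / (p + ε)) ^ (σ - 1) * (q + ε) := by
        gcongr <;> linarith
      _ = (p + ε) ^ (1 - σ) * (q + ε) ^ σ := tangent_bound_at_div_eq hpε hqε
  have hcont : ContinuousAt (fun ε : ℝ => (p + ε) ^ (1 - σ) * (q + ε) ^ σ) 0 := by
    fun_prop (disch := assumption)
  have hlim := hcont.tendsto.mono_left (nhdsWithin_le_nhds (s := Ioi 0))
  simp only [add_zero] at hlim
  exact ge_of_tendsto hlim (eventually_nhdsWithin_of_forall shifted)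

end Real

open Real

lemma cfc_rpow_mul_self_le {𝒜 : Type*} [CStarAlgebra 𝒜] [PartialOrder 𝒜] [StarOrderedRing 𝒜]
    {a : 𝒜} (ha : 0 ≤ a) {σ l : ℝ} (hσ : σ ∈ Icc (0 : ℝ) 1) (hl : 0 < l) :
    cfc (fun x : ℝ => x ^ σ) a * cfc (fun x : ℝ => x ^ σ) a
      ≤ ((1 - σ) * l ^ σ) • (1 : 𝒜) + (σ * l ^ (σ - 1)) • (a * a) := by
  have hcont : Continuous fun x : ℝ => x ^ σ := continuous_id.rpow_const fun _ => Or.inr hσ.1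
  have rhs : cfc (fun x : ℝ => (1 - σ) * l ^ σ + σ * l ^ (σ - 1) * (x * x)) a
      = ((1 - σ) * l ^ σ) • (1 : 𝒜) + (σ * l ^ (σ - 1)) • (a * a) := by
    rw [cfc_add .., cfc_const .., cfc_const_mul .., cfc_mul .., cfc_id' ℝ a,
      Algebra.algebraMap_eq_smul_one]
  rw [← cfc_mul _ _ a hcont.continuousOn hcont.continuousOn, ← rhs]
  refine cfc_mono fun x hx => ?_
  have hx : 0 ≤ x := spectrum_nonneg_of_nonneg ha hx
  rw [← mul_rpow hx hx]
  exact rpow_le_tangent_line hσ hl (mul_nonneg hx hx)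

namespace ContinuousLinearMap

variable {H : Type*} [NormedAddCommGroup H] [InnerProductSpace ℂ H] [CompleteSpace H]
  {A : H →L[ℂ] H}

lemma IsPositive.norm_cfc_rpow_apply_sq_le (hA : A.IsPositive) {σ l : ℝ}
    (hσ : σ ∈ Icc (0 : ℝ) 1) (hl : 0 < l) (w : H) :
    ‖cfc (fun x : ℝ => x ^ σ) A w‖ ^ 2
      ≤ (1 - σ) * l ^ σ * ‖w‖ ^ 2 + σ * l ^ (σ - 1) * ‖A w‖ ^ 2 := by
  set B := cfc (fun x : ℝ => x ^ σ) A
  have hB : adjoint B = B := (cfc_predicate (fun x : ℝ => x ^ σ) A).adjoint_eq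
  have hle := cfc_rpow_mul_self_le ((nonneg_iff_isPositive A).2 hA) hσ hl
  have hform := ((le_def _ _).1 hle).re_inner_nonneg_left w
  rw [apply_norm_sq_eq_inner_adjoint_left, hB, apply_norm_sq_eq_inner_adjoint_left,
    hA.isSelfAdjoint.adjoint_eq]
  simpa [inner_sub_left, inner_add_left, RCLike.real_smul_eq_coe_smul (K := ℂ), inner_smul_left,
    inner_self_eq_norm_sq_to_K, ← Complex.ofReal_pow] using hform

lemma IsPositive.norm_cfc_rpow_apply_le (hA : A.IsPositive) {σ : ℝ} (hσ : σ ∈ Icc (0 : ℝ) 1)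
    (w : H) : ‖cfc (fun x : ℝ => x ^ σ) A w‖ ≤ ‖w‖ ^ (1 - σ) * ‖A w‖ ^ σ := by
  have hsq := le_rpow_mul_rpow_of_forall_le_tangent_bound hσ (sq_nonneg ‖w‖) (sq_nonneg ‖A w‖)
    fun l hl => hA.norm_cfc_rpow_apply_sq_le hσ hl w
  rw [← rpow_pow_comm (norm_nonneg _), ← rpow_pow_comm (norm_nonneg _), ← mul_pow] at hsq
  exact le_of_pow_le_pow_left₀ two_ne_zero (by positivity) hsq

end ContinuousLinearMap

open ContinuousLinearMap

/-- **Cordes-type interpolation inequality.** Let `H, K` be Hilbert spaces,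
`X : H → K` a bounded linear operator and `A : H → H` a positive (semidefinite, self-adjoint)
bounded operator.  Then for every `σ ∈ [0,1]`, `‖X A^σ‖ ≤ ‖X‖^{1−σ} ‖X A‖^σ`, where `A^σ` is
given by the continuous functional calculus. -/
theorem stmt10 {H K : Type*} [NormedAddCommGroup H] [InnerProductSpace ℂ H] [CompleteSpace H]
    [NormedAddCommGroup K] [InnerProductSpace ℂ K] [CompleteSpace K]
    (X : H →L[ℂ] K) (A : H →L[ℂ] H) (hA : A.IsPositive)
    (σ : ℝ) (hσ : σ ∈ Set.Icc (0 : ℝ) 1) :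
    ‖X ∘L cfc (fun x : ℝ => x ^ σ) A‖ ≤ ‖X‖ ^ (1 - σ) * ‖X ∘L A‖ ^ σ := by
  set B := cfc (fun x : ℝ => x ^ σ) A
  have hB : adjoint B = B := (cfc_predicate (fun x : ℝ => x ^ σ) A).adjoint_eq
  have hAX : ‖A ∘L adjoint X‖ = ‖X ∘L A‖ := by
    rw [← LinearIsometryEquiv.norm_map adjoint (X ∘L A), adjoint_comp, hA.isSelfAdjoint.adjoint_eq]
  have hX : ‖adjoint X‖ = ‖X‖ := LinearIsometryEquiv.norm_map adjoint X
  rw [← LinearIsometryEquiv.norm_map adjoint, adjoint_comp, hB]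
  refine opNorm_le_bound _ (by positivity) fun u => ?_
  have hσ₀ := hσ.1
  have hσ₁ := sub_nonneg.2 hσ.2
  calc ‖B (adjoint X u)‖ ≤ ‖adjoint X u‖ ^ (1 - σ) * ‖A (adjoint X u)‖ ^ σ :=
        hA.norm_cfc_rpow_apply_le hσ _
    _ ≤ (‖X‖ * ‖u‖) ^ (1 - σ) * (‖X ∘L A‖ * ‖u‖) ^ σ := by
        gcongr
        · exact hX ▸ le_opNorm _ u
        · exact hAX ▸ le_opNorm (A ∘L adjoint X) u
    _ = ‖X‖ ^ (1 - σ) * ‖X ∘L A‖ ^ σ * ‖u‖ := by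
        rw [mul_rpow (norm_nonneg _) (norm_nonneg _), mul_rpow (norm_nonneg _) (norm_nonneg _),
          mul_mul_mul_comm, ← rpow_add' (norm_nonneg _) (by norm_num), sub_add_cancel, rpow_one]
end
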